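/- arXiv:2205.00527 — 2 statements merged into one kernel-verified Lean document; each statement's English description precedes it below -/
import Mathlib

section
/- For every nonnegative integer N, the following identity holds in the polynomial ring ℤ[q, z]: ∑_{π ∈ D_{≤N}} q^{O(π)} z^{γ(π)} = ∑_{k=0}^{N} q^k z^k [N choose k]_q, where the sum on the left runs over the (finitely many) partitions into distinct parts all ≤ N. -/
/-- Sum of `f` over the entries of a list at even 0-based positions, i.e. over the
odd-indexed parts `λ1, λ3, λ5, …` of a partition `(λ1, λ2, λ3, …)`. -/
def sumAlt (f : ℕ → ℕ) : List ℕ → ℕ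
  | [] => 0
  | [a] => f a
  | a :: _ :: l => f a + sumAlt f l

/-- `O(π) = λ1 + λ3 + λ5 + ⋯`, the sum of the odd-indexed parts. -/
def Osum (l : List ℕ) : ℕ := sumAlt id l

/-- `E(π) = λ2 + λ4 + λ6 + ⋯`, the sum of the even-indexed parts. -/
def Esum (l : List ℕ) : ℕ := sumAlt id l.tail

/-- `γ(π) = λ1 − λ2 + λ3 − λ4 + ⋯ = O(π) − E(π)`, the alternating sum of the parts.
For a weakly decreasing list we have `Osum l ≥ Esum l`, so natural subtraction is exact. -/
def gammaSum (l : List ℕ) : ℕ := Osum l - Esum l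

/-- `⌈O⌉(π) = ∑ ⌈λ_{2i−1}/2⌉`. -/
def ceilO (l : List ℕ) : ℕ := sumAlt (fun a => (a + 1) / 2) l

/-- `⌊O⌋(π) = ∑ ⌊λ_{2i−1}/2⌋`. -/
def floorO (l : List ℕ) : ℕ := sumAlt (fun a => a / 2) l

/-- `⌈E⌉(π) = ∑ ⌈λ_{2i}/2⌉`. -/
def ceilE (l : List ℕ) : ℕ := sumAlt (fun a => (a + 1) / 2) l.tail

/-- `⌊E⌋(π) = ∑ ⌊λ_{2i}/2⌋`. -/
def floorE (l : List ℕ) : ℕ := sumAlt (fun a => a / 2) l.tail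

/-- A partition: a weakly decreasing finite list of positive integers. -/
def IsPartition (l : List ℕ) : Prop := l.Pairwise (· ≥ ·) ∧ ∀ x ∈ l, 0 < x

/-- A partition into distinct parts: a strictly decreasing finite list of positive integers. -/
def IsDistinctPartition (l : List ℕ) : Prop := l.Pairwise (· > ·) ∧ ∀ x ∈ l, 0 < x

/-- The Gaussian binomial coefficient `[n choose k]_q` as a polynomial in `q`
(defined by the q-Pascal recurrence; it equals `(q;q)_n / ((q;q)_k (q;q)_{n−k})`). -/
noncomputable def qbinom : ℕ → ℕ → Polynomial ℤ
  | _, 0 => 1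
  | 0, _ + 1 => 0
  | n + 1, k + 1 => qbinom n k + Polynomial.X ^ (k + 1) * qbinom n (k + 1)


/-!
Let `F_N = ∑ q^{O(π)} z^{γ(π)}` and `G_N = ∑ q^{E(π)} z^{N-γ(π)}` over `π ∈ D_{≤N}`. A partition
in `D_{≤N+1}` either lies in `D_{≤N}` or is `N+1` prepended to some `π ∈ D_{≤N}`, and prepending
turns `(O, E, γ)` into `(N+1+E, O, N+1-γ)`. Hence `F_{N+1} = F_N + q^{N+1} z G_N` and
`G_{N+1} = z G_N + F_N`. By the two q-Pascal rules, `∑_k (qz)^k [N choose k]_q` and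
`∑_k z^k [N choose k]_q` satisfy the same recurrences with the same initial values.
-/

section QPascal

open Polynomial

theorem qbinom_succ_succ (n k : ℕ) :
    qbinom (n + 1) (k + 1) = qbinom n k + X ^ (k + 1) * qbinom n (k + 1) := rfl

theorem qbinom_zero_right (n : ℕ) : qbinom n 0 = 1 := by
  cases n <;> rfl

theorem qbinom_eq_zero_of_lt : ∀ {n k : ℕ}, n < k → qbinom n k = 0
  | 0, _ + 1, _ => rfl
  | n + 1, k + 1, h => by
    rw [qbinom_succ_succ, qbinom_eq_zero_of_lt (by omega : n < k),
      qbinom_eq_zero_of_lt (by omega : n < k + 1), mul_zero, add_zero]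

-- The dual q-Pascal rule `[n+1, k+1] = q^(n-k) [n, k] + [n, k+1]`, written with `n = m + k`.
theorem qbinom_add_succ_succ : ∀ m k : ℕ,
    qbinom (m + k + 1) (k + 1) = X ^ m * qbinom (m + k) k + qbinom (m + k) (k + 1)
  | 0, k => by
    rw [zero_add, qbinom_succ_succ, qbinom_eq_zero_of_lt k.lt_succ_self, pow_zero,
      one_mul, mul_zero]
  | m + 1, 0 => by
    have ih := qbinom_add_succ_succ m 0
    have p₁ := qbinom_succ_succ (m + 1) 0
    have p₂ := qbinom_succ_succ m 0
    simp only [add_zero, zero_add, qbinom_zero_right, mul_one] at ih p₁ p₂ ⊢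
    linear_combination p₁ + X * ih - p₂
  | m + 1, k + 1 => by
    have h₁ := qbinom_add_succ_succ (m + 1) k
    have h₂ := qbinom_add_succ_succ m (k + 1)
    have p₁ := qbinom_succ_succ (m + 1 + k + 1) (k + 1)
    have p₂ := qbinom_succ_succ (m + 1 + k) k
    have p₃ := qbinom_succ_succ (m + 1 + k) (k + 1)
    rw [show m + (k + 1) = m + 1 + k by omega] at h₂
    rw [show m + 1 + (k + 1) = m + 1 + k + 1 by omega]
    linear_combination p₁ + h₁ - X ^ (m + 1) * p₂ + X ^ (k + 2) * h₂ - p₃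

end QPascal

section GeneratingFunction

variable {R : Type*} [CommRing R] (q : R)

noncomputable def qbinomGF (N : ℕ) (w : R) : R :=
  ∑ k ∈ Finset.range (N + 1), w ^ k * Polynomial.aeval q (qbinom N k)

theorem qbinomGF_eq_sum_range_add_one {N M : ℕ} (h : N ≤ M) (w : R) :
    qbinomGF q N w =
      ∑ k ∈ Finset.range M, w ^ (k + 1) * Polynomial.aeval q (qbinom N (k + 1)) + 1 := by
  induction M, h using Nat.le_induction with
  | base => rw [qbinomGF, Finset.sum_range_succ', qbinom_zero_right, pow_zero, map_one, mul_one]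
  | succ M hM ih =>
    rw [ih, Finset.sum_range_succ, qbinom_eq_zero_of_lt (by omega : N < M + 1), map_zero,
      mul_zero, add_zero]

theorem qbinomGF_succ (N : ℕ) (w : R) :
    qbinomGF q (N + 1) w = w * qbinomGF q N w + qbinomGF q N (q * w) := by
  rw [qbinomGF_eq_sum_range_add_one q le_rfl, qbinomGF_eq_sum_range_add_one q N.le_succ (q * w),
    qbinomGF, Finset.mul_sum, ← add_assoc, ← Finset.sum_add_distrib]
  congr 1
  refine Finset.sum_congr rfl fun k _ => ?_
  rw [qbinom_succ_succ, map_add, map_mul, map_pow, Polynomial.aeval_X]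
  ring

theorem qbinomGF_succ_mul (N : ℕ) (w : R) :
    qbinomGF q (N + 1) (q * w) = qbinomGF q N (q * w) + q ^ (N + 1) * w * qbinomGF q N w := by
  rw [qbinomGF_eq_sum_range_add_one q le_rfl, qbinomGF_eq_sum_range_add_one q N.le_succ (q * w),
    qbinomGF, Finset.mul_sum, add_right_comm, ← Finset.sum_add_distrib]
  congr 1
  refine Finset.sum_congr rfl fun k hk => ?_
  obtain ⟨m, rfl⟩ := Nat.exists_eq_add_of_le' (Nat.lt_succ_iff.mp (Finset.mem_range.mp hk))
  rw [qbinom_add_succ_succ, map_add, map_mul, map_pow, Polynomial.aeval_X]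
  ring

end GeneratingFunction

def descRange : ℕ → List ℕ
  | 0 => []
  | n + 1 => (n + 1) :: descRange n

theorem mem_descRange {N x : ℕ} : x ∈ descRange N ↔ 0 < x ∧ x ≤ N := by
  induction N with
  | zero => simp only [descRange, List.not_mem_nil, false_iff]; omega
  | succ N ih => rw [descRange, List.mem_cons, ih]; omega

theorem pairwise_descRange (N : ℕ) : (descRange N).Pairwise (· > ·) := by
  induction N with
  | zero => exact List.Pairwise.nil
  | succ N ih =>
    exact List.pairwise_cons.mpr ⟨fun x hx => by have := mem_descRange.mp hx; omega, ih⟩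

theorem sublist_descRange_iff {N : ℕ} {l : List ℕ} :
    l.Sublist (descRange N) ↔ IsDistinctPartition l ∧ ∀ x ∈ l, x ≤ N := by
  refine ⟨fun h => ⟨⟨(pairwise_descRange N).sublist h, fun x hx => ?_⟩, fun x hx => ?_⟩,
    fun ⟨⟨hl, hpos⟩, hN⟩ => ?_⟩
  · exact (mem_descRange.mp (h.subset hx)).1
  · exact (mem_descRange.mp (h.subset hx)).2
  · exact List.sublist_of_subperm_of_pairwise
      (List.subperm_of_subset hl.nodup fun x hx => mem_descRange.mpr ⟨hpos x hx, hN x hx⟩)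
      hl (pairwise_descRange N)

theorem List.sum_map_sublists'_cons {α M : Type*} [AddCommMonoid M] (f : List α → M) (a : α)
    (l : List α) :
    ((a :: l).sublists'.map f).sum =
      (l.sublists'.map f).sum + (l.sublists'.map fun t => f (a :: t)).sum := by
  rw [List.sublists'_cons, List.map_append, List.sum_append, List.map_map]
  rfl

theorem Osum_cons (a : ℕ) (l : List ℕ) : Osum (a :: l) = a + Esum l := by
  cases l <;> rfl

theorem Esum_cons (a : ℕ) (l : List ℕ) : Esum (a :: l) = Osum l := rfl

theorem Esum_le_Osum_and_Osum_le_Esum_add {l : List ℕ} (hl : l.Pairwise (· ≥ ·)) {a : ℕ}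
    (ha : ∀ x ∈ l, x ≤ a) : Esum l ≤ Osum l ∧ Osum l ≤ Esum l + a := by
  induction l generalizing a with
  | nil => exact ⟨le_rfl, Nat.le_add_right _ _⟩
  | cons b t ih =>
    obtain ⟨htb, ht⟩ := List.pairwise_cons.mp hl
    have := ih ht htb
    have := ha b List.mem_cons_self
    rw [Osum_cons, Esum_cons]
    omega

theorem gammaSum_le {l : List ℕ} (hl : l.Pairwise (· ≥ ·)) {a : ℕ} (ha : ∀ x ∈ l, x ≤ a) :
    gammaSum l ≤ a := by
  have := Esum_le_Osum_and_Osum_le_Esum_add hl ha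
  rw [gammaSum]
  omega

theorem gammaSum_cons {l : List ℕ} (hl : l.Pairwise (· ≥ ·)) {a : ℕ} (ha : ∀ x ∈ l, x ≤ a) :
    gammaSum (a :: l) = a - gammaSum l := by
  have := Esum_le_Osum_and_Osum_le_Esum_add hl ha
  rw [gammaSum, gammaSum, Osum_cons, Esum_cons]
  omega

theorem pairwise_ge_and_le_of_mem_sublists'_descRange {N : ℕ} {l : List ℕ}
    (hl : l ∈ (descRange N).sublists') : l.Pairwise (· ≥ ·) ∧ ∀ x ∈ l, x ≤ N := by
  obtain ⟨⟨hs, -⟩, hN⟩ := sublist_descRange_iff.mp (List.mem_sublists'.mp hl)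
  exact ⟨hs.imp le_of_lt, hN⟩

section PartitionGF

variable {R : Type*} [CommSemiring R] (q z : R)

def oddGammaGF (N : ℕ) : R :=
  ((descRange N).sublists'.map fun l => q ^ Osum l * z ^ gammaSum l).sum

-- `N - γ(π)` is exact: `γ(π) ≤ N` on `D_{≤N}` by `gammaSum_le`.
def evenCogammaGF (N : ℕ) : R :=
  ((descRange N).sublists'.map fun l => q ^ Esum l * z ^ (N - gammaSum l)).sum

theorem oddGammaGF_succ (N : ℕ) :
    oddGammaGF q z (N + 1) = oddGammaGF q z N + q ^ (N + 1) * z * evenCogammaGF q z N := by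
  rw [oddGammaGF, descRange, List.sum_map_sublists'_cons, evenCogammaGF, ← List.sum_map_mul_left]
  congr 2
  refine List.map_congr_left fun l hl => ?_
  obtain ⟨hs, hN⟩ := pairwise_ge_and_le_of_mem_sublists'_descRange hl
  have hγ := gammaSum_le hs hN
  rw [Osum_cons, gammaSum_cons hs fun x hx => (hN x hx).trans N.le_succ,
    show N + 1 - gammaSum l = N - gammaSum l + 1 by omega]
  ring

theorem evenCogammaGF_succ (N : ℕ) :
    evenCogammaGF q z (N + 1) = z * evenCogammaGF q z N + oddGammaGF q z N := by
  rw [evenCogammaGF, descRange, List.sum_map_sublists'_cons, evenCogammaGF, oddGammaGF,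
    ← List.sum_map_mul_left]
  congr 2 <;> refine List.map_congr_left fun l hl => ?_
  all_goals
    obtain ⟨hs, hN⟩ := pairwise_ge_and_le_of_mem_sublists'_descRange hl
    have hγ := gammaSum_le hs hN
  · rw [show N + 1 - gammaSum l = N - gammaSum l + 1 by omega]
    ring
  · rw [Esum_cons, gammaSum_cons hs fun x hx => (hN x hx).trans N.le_succ,
      show N + 1 - (N + 1 - gammaSum l) = gammaSum l by omega]

end PartitionGF

theorem oddGammaGF_eq_qbinomGF_and_evenCogammaGF_eq_qbinomGF {R : Type*} [CommRing R]
    (q z : R) (N : ℕ) :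
    oddGammaGF q z N = qbinomGF q N (q * z) ∧ evenCogammaGF q z N = qbinomGF q N z := by
  induction N with
  | zero => simp [oddGammaGF, evenCogammaGF, qbinomGF, descRange, Osum, Esum, gammaSum, sumAlt,
    qbinom_zero_right]
  | succ N ih =>
    rw [oddGammaGF_succ, evenCogammaGF_succ, qbinomGF_succ_mul, qbinomGF_succ, ih.1, ih.2]
    exact ⟨rfl, rfl⟩

open MvPolynomial in
/-- In `ℤ[q, z]` (with `q = X 0`, `z = X 1`):
`∑_{π ∈ D_{≤N}} q^{O(π)} z^{γ(π)} = ∑_{k=0}^{N} q^k z^k [N choose k]_q`. -/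
theorem distinct_odd_alternating_gf (N : ℕ) :
    ∑ᶠ l ∈ {l : List ℕ | IsDistinctPartition l ∧ ∀ x ∈ l, x ≤ N},
      (X 0 : MvPolynomial (Fin 2) ℤ) ^ Osum l * X 1 ^ gammaSum l
    = ∑ k ∈ Finset.range (N + 1),
        (X 0 : MvPolynomial (Fin 2) ℤ) ^ k * X 1 ^ k
          * Polynomial.aeval (X 0 : MvPolynomial (Fin 2) ℤ) (qbinom N k) := by
  have hset : {l : List ℕ | IsDistinctPartition l ∧ ∀ x ∈ l, x ≤ N} =
      ↑(descRange N).sublists'.toFinset := by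
    ext l
    rw [Set.mem_ofPred_eq, Finset.mem_coe, List.mem_toFinset, List.mem_sublists',
      sublist_descRange_iff]
  rw [hset, finsum_mem_coe_finset,
    List.sum_toFinset _ (List.nodup_sublists'.mpr (pairwise_descRange N).nodup)]
  have hgf := (oddGammaGF_eq_qbinomGF_and_evenCogammaGF_eq_qbinomGF
    (X 0 : MvPolynomial (Fin 2) ℤ) (X 1) N).1
  rw [qbinomGF] at hgf
  simp only [mul_pow] at hgf
  exact hgf
end

section
/- For all nonnegative integers N and n, the number of partitions π into distinct parts with largest part ≤ N and O(π) = n equals the number of partitions of n whose largest hook length is at most N, i.e., partitions μ = (μ1, …, μr) of n with μ1 + r − 1 ≤ N. -/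
/-! The hook lengths `h(1,1) > h(1,2) > h(2,2) > h(2,3) > ⋯` of a partition `μ`, read along the
main diagonal and the cells just right of it, form a partition `π` into distinct parts. Its
odd-indexed parts are the diagonal hook lengths, which add up to `|μ|`, and its largest part is
the largest hook length `h(1,1)`. Conversely `π = (λ₁, λ₂, …)` determines `μ`: the first row of `μ`
has length `1 + λ₂ - λ₃ + λ₄ - ⋯`, its first column has length `λ₁ - λ₂ + λ₃ - ⋯`, and deleting
both leaves the partition determined by `(λ₃, λ₄, …)`. -/

open List

lemma le_headI_of_mem {α : Type*} [Preorder α] [Inhabited α] {l : List α}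
    (h : l.Pairwise (· ≥ ·)) {x : α} (hx : x ∈ l) : x ≤ l.headI := by
  cases l with
  | nil => simp at hx
  | cons a t =>
    rcases mem_cons.1 hx with rfl | hx
    · exact le_rfl
    · exact rel_of_pairwise_cons h hx

lemma IsDistinctPartition.isPartition {l : List ℕ} (h : IsDistinctPartition l) :
    IsPartition l :=
  ⟨h.1.imp le_of_lt, h.2⟩

lemma IsDistinctPartition.of_cons {x : ℕ} {l : List ℕ} (h : IsDistinctPartition (x :: l)) :
    IsDistinctPartition l :=
  ⟨h.1.tail, fun z hz => h.2 z (mem_cons_of_mem x hz)⟩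

lemma isPartition_nil : IsPartition [] :=
  ⟨Pairwise.nil, fun _ h => absurd h not_mem_nil⟩

lemma IsPartition.of_cons {x : ℕ} {l : List ℕ} (h : IsPartition (x :: l)) : IsPartition l :=
  ⟨h.1.tail, fun z hz => h.2 z (mem_cons_of_mem x hz)⟩

/-- `λ₁ - λ₂ + λ₃ - λ₄ + ⋯`; the subtractions are exact on weakly decreasing lists. -/
def altSum : List ℕ → ℕ
  | [] => 0
  | [x] => x
  | x :: y :: l => (x - y) + altSum l

lemma altSum_cons_add_altSum {x : ℕ} {l : List ℕ} (h : (x :: l).Pairwise (· ≥ ·)) :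
    altSum (x :: l) + altSum l = x := by
  induction l generalizing x with
  | nil => rfl
  | cons y l ih =>
    have hyx : y ≤ x := rel_of_pairwise_cons h mem_cons_self
    have := ih h.tail
    simp only [altSum] at this ⊢
    omega

/-- The partition with first row `a + 1` and first column `b + 1` (for `ν.length ≤ b`)
whose cells off the first row and column form `ν`. -/
def addHook (a b : ℕ) (ν : List ℕ) : List ℕ :=
  (a + 1) :: (ν.map (· + 1) ++ replicate (b - ν.length) 1)

def dropColumn (t : List ℕ) : List ℕ :=
  (t.takeWhile (2 ≤ ·)).map (· - 1)

section Hooks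

variable {a b : ℕ} {ν : List ℕ}

lemma length_addHook (hb : ν.length ≤ b) : (addHook a b ν).length = b + 1 := by
  simp [addHook]
  omega

lemma sum_addHook (hb : ν.length ≤ b) : (addHook a b ν).sum = a + b + 1 + ν.sum := by
  simp [addHook]
  omega

lemma isPartition_addHook (hν : IsPartition ν) (ha : ν.headI ≤ a) :
    IsPartition (addHook a b ν) := by
  have hle : ∀ x ∈ ν, x ≤ a := fun x hx => (le_headI_of_mem hν.1 hx).trans ha
  refine ⟨pairwise_cons.2 ⟨?_, pairwise_append.2 ⟨?_, ?_, ?_⟩⟩, ?_⟩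
  · simp only [mem_append, mem_map, mem_replicate]
    rintro z (⟨x, hx, rfl⟩ | ⟨-, rfl⟩)
    · have := hle x hx; omega
    · omega
  · exact hν.1.map _ fun _ _ h => by omega
  · exact pairwise_replicate.2 (Or.inr le_rfl)
  · simp only [mem_map, mem_replicate]
    rintro _ ⟨x, hx, rfl⟩ _ ⟨-, rfl⟩
    have := hν.2 x hx; omega
  · simp only [addHook, mem_cons, mem_append, mem_map, mem_replicate]
    rintro z (rfl | ⟨x, -, rfl⟩ | ⟨-, rfl⟩) <;> omega

lemma dropColumn_tail_addHook (hν : ∀ x ∈ ν, 0 < x) : dropColumn (addHook a b ν).tail = ν := by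
  have hlarge : ∀ x ∈ ν.map (· + 1), decide (2 ≤ x) := by
    simp only [mem_map, decide_eq_true_eq]
    rintro _ ⟨x, hx, rfl⟩
    have := hν x hx; omega
  have hone : (replicate (b - ν.length) 1).takeWhile (fun z => decide (2 ≤ z)) = [] := by
    cases b - ν.length <;> simp [replicate_succ]
  rw [addHook, tail_cons, dropColumn, takeWhile_append_of_pos hlarge, hone, append_nil, map_map]
  exact (map_congr_left fun x _ => by simp).trans (map_id ν)

lemma length_dropColumn_le (t : List ℕ) : (dropColumn t).length ≤ t.length := by
  simpa [dropColumn] using (t.takeWhile_sublist _).length_le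

lemma isPartition_dropColumn {t : List ℕ} (ht : t.Pairwise (· ≥ ·)) :
    IsPartition (dropColumn t) := by
  refine ⟨(ht.sublist (t.takeWhile_sublist _)).map _ fun _ _ h => by omega, ?_⟩
  simp only [dropColumn, mem_map]
  rintro _ ⟨x, hx, rfl⟩
  have := mem_takeWhile_imp hx
  simp only [decide_eq_true_eq] at this
  omega

lemma headI_dropColumn_lt {m : ℕ} {t : List ℕ} (h : IsPartition (m :: t)) :
    (dropColumn t).headI < m := by
  have hm := h.2 m mem_cons_self
  cases t with
  | nil => simpa [dropColumn] using hm
  | cons x t =>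
    have hxm : x ≤ m := rel_of_pairwise_cons h.1 mem_cons_self
    by_cases hx : 2 ≤ x <;> simp [dropColumn, hx] <;> omega

lemma map_succ_dropColumn_append_replicate {t : List ℕ} (ht : IsPartition t) :
    (dropColumn t).map (· + 1) ++ replicate (t.length - (dropColumn t).length) 1 = t := by
  induction t with
  | nil => rfl
  | cons x t ih =>
    by_cases hx : 2 ≤ x
    · have hdrop : dropColumn (x :: t) = (x - 1) :: dropColumn t := by simp [dropColumn, hx]
      rw [hdrop, map_cons, cons_append, length_cons, length_cons, Nat.add_sub_add_right,
        ih ht.of_cons, Nat.sub_add_cancel (by omega)]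
    · have hdrop : dropColumn (x :: t) = [] := by simp [dropColumn, hx]
      have hones : ∀ z ∈ x :: t, z = 1 := fun z hz => by
        have hzx : z ≤ x := le_headI_of_mem ht.1 hz
        have := ht.2 z hz
        omega
      rw [hdrop, map_nil, nil_append, length_nil, Nat.sub_zero]
      exact (eq_replicate_iff.2 ⟨rfl, hones⟩).symm

lemma addHook_dropColumn {m : ℕ} {t : List ℕ} (h : IsPartition (m :: t)) :
    addHook (m - 1) t.length (dropColumn t) = m :: t := by
  rw [addHook, Nat.sub_add_cancel (h.2 m mem_cons_self),
    map_succ_dropColumn_append_replicate h.of_cons]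

end Hooks

@[elab_as_elim]
lemma IsPartition.hook_induction {P : (μ : List ℕ) → IsPartition μ → Prop}
    (nil : P [] isPartition_nil)
    (hook : ∀ a b ν (hν : IsPartition ν) (ha : ν.headI ≤ a), ν.length ≤ b → P ν hν →
      P (addHook a b ν) (isPartition_addHook hν ha))
    (μ : List ℕ) (hμ : IsPartition μ) : P μ hμ := by
  induction hlen : μ.length using Nat.strong_induction_on generalizing μ with
  | _ k ih =>
    cases μ with
    | nil => exact nil
    | cons m t =>
      have hν := isPartition_dropColumn (t := t) hμ.1.tail
      have hν_len := length_dropColumn_le t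
      have := hook _ _ _ hν (Nat.le_sub_one_of_lt (headI_dropColumn_lt hμ)) hν_len
        (ih _ (by rw [← hlen, length_cons]; omega) _ hν rfl)
      convert this using 1
      exact (addHook_dropColumn hμ).symm

/-- `h(1,1), h(1,2), h(2,2), h(2,3), …`: for `μ = m :: t`, `m + t.length` and
`m - 1 + (dropColumn t).length` are the hook lengths of the cells `(1,1)` and `(1,2)`, the latter
being `0` when there is no cell `(1,2)`. -/
def diagonalHooks : List ℕ → List ℕ
  | [] => []
  | m :: t =>
      (m + t.length) ::
        if m - 1 + (dropColumn t).length = 0 then []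
        else (m - 1 + (dropColumn t).length) :: diagonalHooks (dropColumn t)
  termination_by l => l.length
  decreasing_by
    have := length_dropColumn_le t
    simp only [length_cons]
    omega

@[simp]
lemma diagonalHooks_nil : diagonalHooks [] = [] := by
  rw [diagonalHooks]

lemma diagonalHooks_addHook {a b : ℕ} {ν : List ℕ} (hν : ∀ x ∈ ν, 0 < x) (hb : ν.length ≤ b) :
    diagonalHooks (addHook a b ν) =
      (a + b + 1) :: if a + ν.length = 0 then [] else (a + ν.length) :: diagonalHooks ν := by
  have hdrop := dropColumn_tail_addHook (a := a) (b := b) hν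
  have htail : (addHook a b ν).tail.length = b := by
    simp only [addHook, tail_cons, length_append, length_map, length_replicate]
    omega
  simp only [addHook, tail_cons] at hdrop htail
  rw [addHook, diagonalHooks, hdrop, htail, Nat.add_sub_cancel, add_right_comm]

section DiagonalHooks

variable {μ : List ℕ}

lemma lt_of_mem_diagonalHooks (hμ : IsPartition μ) {z : ℕ} (hz : z ∈ diagonalHooks μ) :
    z < μ.headI + μ.length := by
  induction μ, hμ using IsPartition.hook_induction generalizing z with
  | nil => simp at hz
  | hook a b ν hν ha hb ih =>
    rw [diagonalHooks_addHook hν.2 hb] at hz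
    rw [length_addHook hb, addHook, headI_cons]
    split_ifs at hz
    · simp only [mem_singleton] at hz
      omega
    · rcases mem_cons.1 hz with rfl | hz
      · omega
      rcases mem_cons.1 hz with rfl | hz
      · omega
      · have := ih hz
        omega

lemma isDistinctPartition_diagonalHooks (hμ : IsPartition μ) :
    IsDistinctPartition (diagonalHooks μ) := by
  induction μ, hμ using IsPartition.hook_induction with
  | nil => exact ⟨by simp, by simp⟩
  | hook a b ν hν ha hb ih =>
    have hlt : ∀ z ∈ diagonalHooks ν, z < a + ν.length := fun z hz =>
      (lt_of_mem_diagonalHooks hν hz).trans_le (by omega)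
    rw [diagonalHooks_addHook hν.2 hb]
    split_ifs with h0
    · exact ⟨pairwise_singleton _ _, by simp⟩
    · refine ⟨pairwise_cons.2 ⟨?_, pairwise_cons.2 ⟨hlt, ih.1⟩⟩, ?_⟩
      · rintro z (_ | ⟨_, hz⟩)
        · omega
        · have := hlt z hz
          omega
      · rintro z (_ | ⟨_, _ | ⟨_, hz⟩⟩)
        · omega
        · omega
        · exact ih.2 z hz

lemma altSum_diagonalHooks (hμ : IsPartition μ) : altSum (diagonalHooks μ) = μ.length := by
  induction μ, hμ using IsPartition.hook_induction with
  | nil => simp [altSum]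
  | hook a b ν hν _ hb ih =>
    rw [diagonalHooks_addHook hν.2 hb, length_addHook hb]
    split_ifs with h0
    · simp only [altSum]
      omega
    · simp only [altSum, ih]
      omega

lemma Osum_diagonalHooks (hμ : IsPartition μ) : Osum (diagonalHooks μ) = μ.sum := by
  induction μ, hμ using IsPartition.hook_induction with
  | nil => simp [Osum, sumAlt]
  | hook a b ν hν _ hb ih =>
    rw [diagonalHooks_addHook hν.2 hb, sum_addHook hb]
    split_ifs with h0
    · obtain rfl : ν = [] := length_eq_zero_iff.1 (by omega)
      rfl
    · change a + b + 1 + Osum (diagonalHooks ν) = _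
      rw [ih]

end DiagonalHooks

def ofDiagonalHooks : List ℕ → List ℕ
  | [] => []
  | [x] => addHook 0 (x - 1) []
  | x :: y :: l => addHook (altSum (y :: l)) (x - y - 1 + altSum l) (ofDiagonalHooks l)

section OfDiagonalHooks

variable {l : List ℕ}

lemma headI_ofDiagonalHooks_cons (x : ℕ) (l : List ℕ) :
    (ofDiagonalHooks (x :: l)).headI = altSum l + 1 := by
  cases l <;> rfl

lemma length_ofDiagonalHooks (hl : IsDistinctPartition l) :
    (ofDiagonalHooks l).length = altSum l := by
  induction l using ofDiagonalHooks.induct with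
  | case1 => rfl
  | case2 x =>
    have := hl.2 x mem_cons_self
    rw [ofDiagonalHooks, length_addHook (Nat.zero_le _), altSum]
    omega
  | case3 x y l ih =>
    have hxy : y < x := rel_of_pairwise_cons hl.1 mem_cons_self
    have := ih hl.of_cons.of_cons
    rw [ofDiagonalHooks, length_addHook (by omega), altSum]
    omega

lemma sum_ofDiagonalHooks (hl : IsDistinctPartition l) : (ofDiagonalHooks l).sum = Osum l := by
  induction l using ofDiagonalHooks.induct with
  | case1 => rfl
  | case2 x =>
    have := hl.2 x mem_cons_self
    rw [ofDiagonalHooks, sum_addHook (Nat.zero_le _)]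
    simp only [sum_nil, Osum, sumAlt, id]
    omega
  | case3 x y l ih =>
    have hxy : y < x := rel_of_pairwise_cons hl.1 mem_cons_self
    have hl' := hl.of_cons.of_cons
    have hy := altSum_cons_add_altSum hl.of_cons.isPartition.1
    rw [ofDiagonalHooks, sum_addHook (by rw [length_ofDiagonalHooks hl']; omega), ih hl']
    change _ = x + Osum l
    omega

lemma isPartition_ofDiagonalHooks (hl : IsDistinctPartition l) :
    IsPartition (ofDiagonalHooks l) := by
  induction l using ofDiagonalHooks.induct with
  | case1 => exact isPartition_nil
  | case2 x => exact isPartition_addHook isPartition_nil le_rfl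
  | case3 x y l ih =>
    refine isPartition_addHook (ih hl.of_cons.of_cons) ?_
    cases l with
    | nil => exact Nat.zero_le _
    | cons z l =>
      have hzy : z < y := rel_of_pairwise_cons hl.of_cons.1 mem_cons_self
      rw [headI_ofDiagonalHooks_cons, altSum]
      omega

lemma diagonalHooks_ofDiagonalHooks (hl : IsDistinctPartition l) :
    diagonalHooks (ofDiagonalHooks l) = l := by
  induction l using ofDiagonalHooks.induct with
  | case1 => exact diagonalHooks_nil
  | case2 x =>
    have := hl.2 x mem_cons_self
    rw [ofDiagonalHooks, diagonalHooks_addHook (by simp) (Nat.zero_le _)]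
    simp only [length_nil, add_zero, if_true]
    congr 1
    omega
  | case3 x y l ih =>
    have hxy : y < x := rel_of_pairwise_cons hl.1 mem_cons_self
    have hy0 := hl.2 y (mem_cons_of_mem _ mem_cons_self)
    have hl' := hl.of_cons.of_cons
    have hy := altSum_cons_add_altSum hl.of_cons.isPartition.1
    have hlen := length_ofDiagonalHooks hl'
    rw [ofDiagonalHooks, diagonalHooks_addHook (isPartition_ofDiagonalHooks hl').2 (by omega),
      hlen, if_neg (by omega), ih hl']
    congr 2
    omega

end OfDiagonalHooks

lemma ofDiagonalHooks_diagonalHooks {μ : List ℕ} (hμ : IsPartition μ) :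
    ofDiagonalHooks (diagonalHooks μ) = μ := by
  induction μ, hμ using IsPartition.hook_induction with
  | nil => rw [diagonalHooks_nil, ofDiagonalHooks]
  | hook a b ν hν ha hb ih =>
    rw [diagonalHooks_addHook hν.2 hb]
    split_ifs with h0
    · obtain ⟨rfl, hν0⟩ : a = 0 ∧ ν.length = 0 := by omega
      obtain rfl := length_eq_zero_iff.1 hν0
      rw [ofDiagonalHooks, zero_add, Nat.add_sub_cancel]
    · have hsorted : ((a + ν.length) :: diagonalHooks ν).Pairwise (· ≥ ·) :=
        pairwise_cons.2 ⟨fun z hz => (lt_of_mem_diagonalHooks hν hz).le.trans (by omega),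
          (isDistinctPartition_diagonalHooks hν).isPartition.1⟩
      have harm := altSum_cons_add_altSum hsorted
      rw [altSum_diagonalHooks hν] at harm
      rw [ofDiagonalHooks, ih, altSum_diagonalHooks hν]
      congr 1 <;> omega

lemma headI_add_length_ofDiagonalHooks_le {l : List ℕ} {N : ℕ} (hl : IsDistinctPartition l)
    (hN : ∀ x ∈ l, x ≤ N) : (ofDiagonalHooks l).headI + (ofDiagonalHooks l).length ≤ N + 1 := by
  cases l with
  | nil => exact Nat.zero_le _
  | cons x l =>
    rw [headI_ofDiagonalHooks_cons, length_ofDiagonalHooks hl]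
    have := altSum_cons_add_altSum hl.isPartition.1
    have := hN x mem_cons_self
    omega

def diagonalHooksEquiv (N n : ℕ) :
    {μ : List ℕ // IsPartition μ ∧ μ.sum = n ∧ μ.headI + μ.length ≤ N + 1} ≃
      {l : List ℕ // IsDistinctPartition l ∧ (∀ x ∈ l, x ≤ N) ∧ Osum l = n} where
  toFun μ := ⟨diagonalHooks μ.1, isDistinctPartition_diagonalHooks μ.2.1,
    fun _ hz => by have := lt_of_mem_diagonalHooks μ.2.1 hz; have := μ.2.2.2; omega,
    (Osum_diagonalHooks μ.2.1).trans μ.2.2.1⟩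
  invFun l := ⟨ofDiagonalHooks l.1, isPartition_ofDiagonalHooks l.2.1,
    (sum_ofDiagonalHooks l.2.1).trans l.2.2.2, headI_add_length_ofDiagonalHooks_le l.2.1 l.2.2.1⟩
  left_inv μ := Subtype.ext (ofDiagonalHooks_diagonalHooks μ.2.1)
  right_inv l := Subtype.ext (diagonalHooks_ofDiagonalHooks l.2.1)

/-- The number of partitions into distinct parts `≤ N` with `O(π) = n` equals the number of
partitions `μ = (μ1, …, μr)` of `n` whose largest hook length `μ1 + r − 1` is at most `N`
(equivalently `μ1 + r ≤ N + 1`, which also covers the empty partition with hook length 0). -/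
theorem finite_schmidt_hook (N n : ℕ) :
    Nat.card {l : List ℕ // IsDistinctPartition l ∧ (∀ x ∈ l, x ≤ N) ∧ Osum l = n} =
      Nat.card {l : List ℕ // IsPartition l ∧ l.sum = n ∧ l.headI + l.length ≤ N + 1} :=
  (Nat.card_congr (diagonalHooksEquiv N n)).symm
end
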